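/- For the classical higher-order Euler polynomials (the case q → 1): if w₁, w₂ are odd positive integers, r ≥ 1, and n ≥ 0, then w₁^n Σ_{j₁,…,j_r=0}^{w₁-1} (-1)^{j₁+⋯+j_r} E_n^{(r)}( w₂ x + (w₂/w₁)(j₁+⋯+j_r) ) = w₂^n Σ_{j₁,…,j_r=0}^{w₂-1} (-1)^{j₁+⋯+j_r} E_n^{(r)}( w₁ x + (w₁/w₂)(j₁+⋯+j_r) ). -/

import Mathlib

/-!
Multiplying by `w₁ ^ n` rescales the generating function `t ↦ w₁ t`, and the alternating sum
over `j` factors as the `r`-th power of a geometric sum. For odd `w₁`,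
`∑_{i<w₁} (-e^{w₂t})^i = (e^{w₁w₂t} + 1) / (e^{w₂t} + 1)`, so the left-hand side has generating
function `(2 (e^{w₁w₂t} + 1) / ((e^{w₁t} + 1)(e^{w₂t} + 1)))^r e^{w₁w₂xt}`, which is symmetric
in `w₁` and `w₂`.
-/

open PowerSeries

/-- The higher-order Euler polynomial `E_n^{(r)}(x)`, defined as `n!` times the `n`-th
coefficient of the power series `(2/(e^t+1))^r e^{xt}`. -/
noncomputable def eulerPoly (r n : ℕ) (x : ℝ) : ℝ :=
  (n.factorial : ℝ) *
    PowerSeries.coeff n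
      ((2 * (PowerSeries.exp ℝ + 1)⁻¹) ^ r * PowerSeries.rescale x (PowerSeries.exp ℝ))

open Finset

namespace PowerSeries

theorem constantCoeff_rescale {R : Type*} [CommSemiring R] (c : R) (φ : R⟦X⟧) :
    constantCoeff (rescale c φ) = constantCoeff φ := by
  rw [← coeff_zero_eq_constantCoeff_apply, coeff_rescale, pow_zero, one_mul,
    coeff_zero_eq_constantCoeff_apply]

theorem rescale_inv {k : Type*} [Field k] (c : k) (φ : k⟦X⟧) :
    rescale c φ⁻¹ = (rescale c φ)⁻¹ := by
  by_cases hφ : constantCoeff φ = 0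
  · rw [inv_eq_zero.2 hφ, map_zero, eq_comm, inv_eq_zero, constantCoeff_rescale, hφ]
  · rw [eq_inv_iff_mul_eq_one (by rwa [constantCoeff_rescale]), ← map_mul,
      PowerSeries.inv_mul_cancel _ hφ, map_one]

theorem rescale_exp_pow {A : Type*} [CommRing A] [Algebra ℚ A] (c : A) (m : ℕ) :
    rescale c (exp A) ^ m = rescale (m * c) (exp A) := by
  rw [← map_pow, exp_pow_eq_rescale_exp, rescale_rescale]

end PowerSeries

theorem Odd.geom_sum_neg_mul_add_one {R : Type*} [CommRing R] {w : ℕ} (hw : Odd w) (x : R) :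
    (∑ i ∈ range w, (-x) ^ i) * (x + 1) = x ^ w + 1 := by
  linear_combination -(geom_sum_mul (-x) w) - hw.neg_pow x

theorem pow_geom_sum_eq_sum_piFinset {R : Type*} [CommSemiring R] (r w : ℕ) (x : R) :
    (∑ i ∈ range w, x ^ i) ^ r =
      ∑ j ∈ Fintype.piFinset fun _ : Fin r => range w, x ^ ∑ l, j l := by
  simp only [← prod_pow_eq_pow_sum, ← prod_univ_sum, prod_const, card_univ, Fintype.card_fin]

section EulerSeries

variable {K : Type*} [Field K] [CharZero K]

theorem constantCoeff_rescale_exp_add_one_ne_zero (c : K) :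
    constantCoeff (rescale c (exp K) + 1) ≠ 0 := by
  simp [constantCoeff_rescale]

theorem geom_sum_neg_rescale_exp {a : ℕ} (ha : Odd a) (b : K) :
    ∑ i ∈ range a, (-rescale b (exp K)) ^ i =
      (rescale (a * b) (exp K) + 1) * (rescale b (exp K) + 1)⁻¹ := by
  rw [eq_mul_inv_iff_mul_eq (constantCoeff_rescale_exp_add_one_ne_zero b),
    ha.geom_sum_neg_mul_add_one, rescale_exp_pow]

theorem inv_mul_geom_sum_neg_rescale_exp_comm {a b : ℕ} (ha : Odd a) (hb : Odd b) :
    (rescale (a : K) (exp K) + 1)⁻¹ * ∑ i ∈ range a, (-rescale (b : K) (exp K)) ^ i =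
      (rescale (b : K) (exp K) + 1)⁻¹ * ∑ i ∈ range b, (-rescale (a : K) (exp K)) ^ i := by
  rw [geom_sum_neg_rescale_exp ha, geom_sum_neg_rescale_exp hb, mul_comm (b : K)]
  ring

noncomputable def eulerSeries (r : ℕ) (x : K) : K⟦X⟧ :=
  (2 * (exp K + 1)⁻¹) ^ r * rescale x (exp K)

theorem rescale_eulerSeries (r : ℕ) (c x : K) :
    rescale c (eulerSeries r x) =
      (2 * (rescale c (exp K) + 1)⁻¹) ^ r * rescale (x * c) (exp K) := by
  simp only [eulerSeries, map_mul, map_pow, map_ofNat, rescale_inv, map_add, map_one,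
    rescale_rescale]

theorem sum_rescale_eulerSeries (r : ℕ) {a : ℕ} (ha : (a : K) ≠ 0) (b x : K) :
    ∑ j ∈ Fintype.piFinset (fun _ : Fin r => range a),
        (-1 : K) ^ (∑ l, j l) • rescale (a : K) (eulerSeries r (b * x + b / a * ∑ l, (j l : K))) =
      (2 * (rescale (a : K) (exp K) + 1)⁻¹ * ∑ i ∈ range a, (-rescale b (exp K)) ^ i) ^ r *
        rescale (a * b * x) (exp K) := by
  rw [mul_pow, pow_geom_sum_eq_sum_piFinset, mul_sum, sum_mul]
  refine sum_congr rfl fun j _ ↦ ?_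
  have harg : (b * x + b / a * ∑ l, (j l : K)) * a = a * b * x + (∑ l, j l : ℕ) * b := by
    push_cast
    field_simp
  rw [rescale_eulerSeries, harg, ← exp_mul_exp_eq_exp_add, ← rescale_exp_pow,
    neg_pow (rescale b (exp K)), smul_eq_C_mul, map_pow, map_neg, map_one]
  ring

end EulerSeries

theorem pow_mul_sum_eulerPoly (r n : ℕ) {a : ℕ} (ha : (a : ℝ) ≠ 0) (b x : ℝ) :
    (a : ℝ) ^ n * ∑ j ∈ Fintype.piFinset (fun _ : Fin r => range a),
        (-1 : ℝ) ^ (∑ l, j l) * eulerPoly r n (b * x + b / a * ∑ l, (j l : ℝ)) =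
      n.factorial * coeff n
        ((2 * (rescale (a : ℝ) (exp ℝ) + 1)⁻¹ * ∑ i ∈ range a, (-rescale b (exp ℝ)) ^ i) ^ r *
          rescale (a * b * x) (exp ℝ)) := by
  rw [← sum_rescale_eulerSeries r ha, map_sum, mul_sum, mul_sum]
  refine sum_congr rfl fun j _ ↦ ?_
  rw [coeff_smul, coeff_rescale, eulerPoly, eulerSeries, smul_eq_mul]
  ring

theorem eulerPoly_symmetry_general (r : ℕ) (n : ℕ) (w₁ w₂ : ℕ)
    (hw₁ : Odd w₁) (hw₂ : Odd w₂) (x : ℝ) :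
    (w₁ : ℝ) ^ n *
        ∑ j ∈ Fintype.piFinset fun _ : Fin r => Finset.range w₁,
          (-1 : ℝ) ^ (∑ l, j l) *
            eulerPoly r n ((w₂ : ℝ) * x + ((w₂ : ℝ) / w₁) * ∑ l, (j l : ℝ)) =
      (w₂ : ℝ) ^ n *
        ∑ j ∈ Fintype.piFinset fun _ : Fin r => Finset.range w₂,
          (-1 : ℝ) ^ (∑ l, j l) *
            eulerPoly r n ((w₁ : ℝ) * x + ((w₁ : ℝ) / w₂) * ∑ l, (j l : ℝ)) := by
  rw [pow_mul_sum_eulerPoly r n (Nat.cast_ne_zero.2 hw₁.pos.ne'),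
    pow_mul_sum_eulerPoly r n (Nat.cast_ne_zero.2 hw₂.pos.ne'), mul_assoc 2,
    inv_mul_geom_sum_neg_rescale_exp_comm hw₁ hw₂, mul_comm (w₁ : ℝ) w₂, mul_assoc 2]

theorem eulerPoly_symmetry (r : ℕ) (hr : 1 ≤ r) (n : ℕ) (w₁ w₂ : ℕ)
    (hw₁ : Odd w₁) (hw₂ : Odd w₂) (hw₁0 : 0 < w₁) (hw₂0 : 0 < w₂) (x : ℝ) :
    (w₁ : ℝ) ^ n *
        ∑ j ∈ Fintype.piFinset fun _ : Fin r => Finset.range w₁,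
          (-1 : ℝ) ^ (∑ l, j l) *
            eulerPoly r n ((w₂ : ℝ) * x + ((w₂ : ℝ) / w₁) * ∑ l, (j l : ℝ)) =
      (w₂ : ℝ) ^ n *
        ∑ j ∈ Fintype.piFinset fun _ : Fin r => Finset.range w₂,
          (-1 : ℝ) ^ (∑ l, j l) *
            eulerPoly r n ((w₁ : ℝ) * x + ((w₁ : ℝ) / w₂) * ∑ l, (j l : ℝ)) :=
  eulerPoly_symmetry_general r n w₁ w₂ hw₁ hw₂ x
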